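/- arXiv:math/0403523 — 4 statements merged into one kernel-verified Lean document; each statement's English description precedes it below -/
import Mathlib

section
/- Let ℓ ≥ 2, λ ∈ (0,1), and τ : ℝ/ℤ → ℝ Lipschitz with constant L. Then the functions ρ⁺(θ) = sup{ t_λ(θ̄) : θ̄ ∈ S, θ₀ = θ } and ρ⁻(θ) = inf{ t_λ(θ̄) : θ̄ ∈ S, θ₀ = θ } are Lipschitz on ℝ/ℤ with constant L/(ℓ - λ). -/
/-- The upper boundary function `ρ⁺` of the attractor: the sup of `t_λ` over all
backward orbits starting at `θ`. -/
noncomputable def upperB (ℓ : ℕ) (lam : ℝ) (τ : UnitAddCircle → ℝ) (θ : UnitAddCircle) : ℝ :=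
  sSup {x : ℝ | ∃ u : ℕ → UnitAddCircle, (∀ k, (ℓ : ℤ) • u (k + 1) = u k) ∧ u 0 = θ ∧
    x = ∑' k : ℕ, lam ^ k * τ (u (k + 1))}

/-- The lower boundary function `ρ⁻` of the attractor. -/
noncomputable def lowerB (ℓ : ℕ) (lam : ℝ) (τ : UnitAddCircle → ℝ) (θ : UnitAddCircle) : ℝ :=
  sInf {x : ℝ | ∃ u : ℕ → UnitAddCircle, (∀ k, (ℓ : ℤ) • u (k + 1) = u k) ∧ u 0 = θ ∧
    x = ∑' k : ℕ, lam ^ k * τ (u (k + 1))}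

/-!
Since `θ ↦ ℓθ` expands distances by the factor `ℓ`, every backward orbit `u` from `θ` is
shadowed by a backward orbit `v` from `θ'` with `dist (u k) (v k) ≤ dist θ θ' / ℓ ^ k`: choose
the `ℓ`-th roots one after the other, each time the one nearest to `u (k + 1)`. For
`L`-Lipschitz `τ` the two sums `t_λ` then differ by at most
`∑ λ ^ k L dist θ θ' / ℓ ^ (k + 1) = L dist θ θ' / (ℓ - λ)`, so the sets of sums over orbits
from `θ` and from `θ'` are within this Hausdorff distance, and so are their suprema and infima.
-/

open scoped NNReal

section SupInf

variable {s t : Set ℝ} {c : ℝ}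

theorem csSup_le_csSup_add (hs : s.Nonempty) (ht : BddAbove t)
    (h : ∀ x ∈ s, ∃ y ∈ t, x ≤ y + c) : sSup s ≤ sSup t + c :=
  csSup_le hs fun x hx =>
    let ⟨_, hy, hxy⟩ := h x hx
    hxy.trans (add_le_add_left (le_csSup ht hy) c)

theorem csInf_le_csInf_add (ht : t.Nonempty) (hs : BddBelow s)
    (h : ∀ y ∈ t, ∃ x ∈ s, x ≤ y + c) : sInf s ≤ sInf t + c := by
  rw [← sub_le_iff_le_add]
  refine le_csInf ht fun y hy => ?_
  obtain ⟨x, hx, hxy⟩ := h y hy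
  exact sub_le_iff_le_add.2 ((csInf_le hs hx).trans hxy)

theorem abs_csSup_sub_csSup_le (hs : s.Nonempty) (ht : t.Nonempty) (hs' : BddAbove s)
    (ht' : BddAbove t) (hst : ∀ x ∈ s, ∃ y ∈ t, |x - y| ≤ c)
    (hts : ∀ y ∈ t, ∃ x ∈ s, |x - y| ≤ c) : |sSup s - sSup t| ≤ c := by
  rw [abs_sub_le_iff, sub_le_iff_le_add', sub_le_iff_le_add']
  refine ⟨csSup_le_csSup_add hs ht' fun x hx => ?_, csSup_le_csSup_add ht hs' fun y hy => ?_⟩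
  · obtain ⟨y, hy, hxy⟩ := hst x hx
    exact ⟨y, hy, by linarith [(abs_le.1 hxy).2]⟩
  · obtain ⟨x, hx, hxy⟩ := hts y hy
    exact ⟨x, hx, by linarith [(abs_le.1 hxy).1]⟩

theorem abs_csInf_sub_csInf_le (hs : s.Nonempty) (ht : t.Nonempty) (hs' : BddBelow s)
    (ht' : BddBelow t) (hst : ∀ x ∈ s, ∃ y ∈ t, |x - y| ≤ c)
    (hts : ∀ y ∈ t, ∃ x ∈ s, |x - y| ≤ c) : |sInf s - sInf t| ≤ c := by
  rw [abs_sub_le_iff, sub_le_iff_le_add', sub_le_iff_le_add']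
  refine ⟨csInf_le_csInf_add ht hs' fun y hy => ?_, csInf_le_csInf_add hs ht' fun x hx => ?_⟩
  · obtain ⟨x, hx, hxy⟩ := hts y hy
    exact ⟨x, hx, by linarith [(abs_le.1 hxy).2]⟩
  · obtain ⟨y, hy, hxy⟩ := hst x hx
    exact ⟨y, hy, by linarith [(abs_le.1 hxy).1]⟩

end SupInf

theorem abs_tsum_le_of_abs_le_geometric {f : ℕ → ℝ} {c r : ℝ} (hr₀ : 0 ≤ r) (hr₁ : r < 1)
    (hf : ∀ k, |f k| ≤ c * r ^ k) : |∑' k, f k| ≤ c / (1 - r) := by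
  rw [div_eq_mul_inv, ← Real.norm_eq_abs]
  exact tsum_of_norm_bounded ((hasSum_geometric_of_lt_one hr₀ hr₁).mul_left c) hf

namespace AddCircle

variable {p : ℝ}

theorem exists_coe_eq_abs_eq_norm (c : AddCircle p) :
    ∃ x : ℝ, (x : AddCircle p) = c ∧ |x| = ‖c‖ := by
  obtain ⟨y, rfl⟩ := QuotientAddGroup.mk_surjective c
  refine ⟨y - round (p⁻¹ * y) * p, ?_, (AddCircle.norm_eq p).symm⟩
  rw [AddCircle.coe_sub, sub_eq_self, AddCircle.coe_eq_zero_iff]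
  exact ⟨round (p⁻¹ * y), zsmul_eq_mul _ _⟩

theorem exists_zsmul_eq_dist_le {n : ℕ} (hn : n ≠ 0) (b a : AddCircle p) :
    ∃ b', (n : ℤ) • b' = a ∧ dist b b' ≤ dist ((n : ℤ) • b) a / n := by
  obtain ⟨x, hx, hxa⟩ := exists_coe_eq_abs_eq_norm (a - (n : ℤ) • b)
  refine ⟨b + ((x / n : ℝ) : AddCircle p), ?_, ?_⟩
  · rw [smul_add, ← AddCircle.coe_zsmul, zsmul_eq_mul, Int.cast_natCast,
      mul_div_cancel₀ x (Nat.cast_ne_zero.2 hn), hx, add_sub_cancel]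
  · rw [dist_self_add_right, dist_comm, dist_eq_norm, ← hxa]
    calc ‖((x / n : ℝ) : AddCircle p)‖ ≤ |x / n| := QuotientAddGroup.norm_mk_le_norm
      _ = |x| / n := by rw [abs_div, Nat.abs_cast]

end AddCircle

def IsBackwardOrbit {p : ℝ} (n : ℕ) (u : ℕ → AddCircle p) : Prop :=
  ∀ k, (n : ℤ) • u (k + 1) = u k

namespace IsBackwardOrbit

variable {p : ℝ} {n : ℕ}

theorem exists_shadow {u : ℕ → AddCircle p} (hn : n ≠ 0) (hu : IsBackwardOrbit n u)
    (θ : AddCircle p) :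
    ∃ v, IsBackwardOrbit n v ∧ v 0 = θ ∧ ∀ k, dist (u k) (v k) ≤ dist (u 0) θ / (n : ℝ) ^ k := by
  choose root hroot hdist using AddCircle.exists_zsmul_eq_dist_le (p := p) hn
  let v : ℕ → AddCircle p := fun k => Nat.rec θ (fun k w => root (u (k + 1)) w) k
  refine ⟨v, fun k => hroot _ _, rfl, fun k => ?_⟩
  induction k with
  | zero => simp [v]
  | succ k ih =>
    calc dist (u (k + 1)) (v (k + 1)) ≤ dist ((n : ℤ) • u (k + 1)) (v k) / n := hdist _ _
      _ = dist (u k) (v k) / n := by rw [hu k]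
      _ ≤ dist (u 0) θ / (n : ℝ) ^ k / n := by gcongr
      _ = dist (u 0) θ / (n : ℝ) ^ (k + 1) := by rw [div_div, pow_succ]

end IsBackwardOrbit

theorem exists_isBackwardOrbit {p : ℝ} {n : ℕ} (hn : n ≠ 0) (θ : AddCircle p) :
    ∃ u, IsBackwardOrbit n u ∧ u 0 = θ :=
  let ⟨v, hv, hv₀, _⟩ := IsBackwardOrbit.exists_shadow hn (u := 0) (fun _ => smul_zero _) θ
  ⟨v, hv, hv₀⟩

/-- The paper's `t_λ(θ̄)` for `θ̄ = (u 0, u 1, …)`. -/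
noncomputable def orbitSum {X : Type*} (lam : ℝ) (τ : X → ℝ) (u : ℕ → X) : ℝ :=
  ∑' k : ℕ, lam ^ k * τ (u (k + 1))

section OrbitSum

variable {X : Type*} {lam C : ℝ} {τ : X → ℝ}

theorem abs_orbitSum_term_le (hlam : 0 ≤ lam) (hC : ∀ x, |τ x| ≤ C) (u : ℕ → X) (k : ℕ) :
    |lam ^ k * τ (u (k + 1))| ≤ C * lam ^ k := by
  rw [abs_mul, abs_of_nonneg (pow_nonneg hlam k), mul_comm]
  exact mul_le_mul_of_nonneg_right (hC _) (pow_nonneg hlam k)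

theorem summable_orbitSum (hlam₀ : 0 ≤ lam) (hlam₁ : lam < 1) (hC : ∀ x, |τ x| ≤ C)
    (u : ℕ → X) : Summable fun k : ℕ => lam ^ k * τ (u (k + 1)) :=
  .of_norm_bounded ((summable_geometric_of_lt_one hlam₀ hlam₁).mul_left C)
    (abs_orbitSum_term_le hlam₀ hC u)

theorem abs_orbitSum_le (hlam₀ : 0 ≤ lam) (hlam₁ : lam < 1) (hC : ∀ x, |τ x| ≤ C)
    (u : ℕ → X) : |orbitSum lam τ u| ≤ C / (1 - lam) :=
  abs_tsum_le_of_abs_le_geometric hlam₀ hlam₁ (abs_orbitSum_term_le hlam₀ hC u)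

theorem abs_orbitSum_sub_le [PseudoMetricSpace X] {K : ℝ≥0} {r d : ℝ} (hlam₀ : 0 ≤ lam)
    (hlam₁ : lam < 1) (hlamr : lam < r) (hC : ∀ x, |τ x| ≤ C) (hτ : LipschitzWith K τ)
    {u v : ℕ → X} (huv : ∀ k, dist (u k) (v k) ≤ d / r ^ k) :
    |orbitSum lam τ u - orbitSum lam τ v| ≤ K * d / (r - lam) := by
  have hr : 0 < r := hlam₀.trans_lt hlamr
  have hterm (k : ℕ) : |lam ^ k * τ (u (k + 1)) - lam ^ k * τ (v (k + 1))|
      ≤ K * d / r * (lam / r) ^ k :=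
    calc |lam ^ k * τ (u (k + 1)) - lam ^ k * τ (v (k + 1))|
        = lam ^ k * dist (τ (u (k + 1))) (τ (v (k + 1))) := by
          rw [← mul_sub, abs_mul, abs_of_nonneg (pow_nonneg hlam₀ k), Real.dist_eq]
      _ ≤ lam ^ k * (K * (d / r ^ (k + 1))) := by
          gcongr
          exact (hτ.dist_le_mul _ _).trans (by gcongr; exact huv _)
      _ = K * d / r * (lam / r) ^ k := by rw [div_pow, pow_succ]; field_simp
  rw [orbitSum, orbitSum, ← (summable_orbitSum hlam₀ hlam₁ hC u).tsum_sub
    (summable_orbitSum hlam₀ hlam₁ hC v)]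
  calc _ ≤ K * d / r / (1 - lam / r) :=
        abs_tsum_le_of_abs_le_geometric (by positivity) ((div_lt_one hr).2 hlamr) hterm
    _ = K * d / (r - lam) := by field_simp

end OrbitSum

/-- `upperB` and `lowerB` are, definitionally, the `sSup` and `sInf` of this set. -/
def orbitSums {p : ℝ} (ℓ : ℕ) (lam : ℝ) (τ : AddCircle p → ℝ) (θ : AddCircle p) : Set ℝ :=
  {x | ∃ u, IsBackwardOrbit ℓ u ∧ u 0 = θ ∧ x = orbitSum lam τ u}

section OrbitSums

variable {p : ℝ} {ℓ : ℕ} {lam C : ℝ} {τ : AddCircle p → ℝ}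

theorem orbitSums_nonempty (hℓ : ℓ ≠ 0) (θ : AddCircle p) : (orbitSums ℓ lam τ θ).Nonempty :=
  let ⟨u, hu, hu₀⟩ := exists_isBackwardOrbit hℓ θ
  ⟨_, u, hu, hu₀, rfl⟩

theorem bddAbove_orbitSums (hlam₀ : 0 ≤ lam) (hlam₁ : lam < 1) (hC : ∀ x, |τ x| ≤ C)
    (θ : AddCircle p) : BddAbove (orbitSums ℓ lam τ θ) := by
  refine ⟨C / (1 - lam), ?_⟩
  rintro _ ⟨u, -, -, rfl⟩
  exact (abs_le.1 (abs_orbitSum_le hlam₀ hlam₁ hC u)).2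

theorem bddBelow_orbitSums (hlam₀ : 0 ≤ lam) (hlam₁ : lam < 1) (hC : ∀ x, |τ x| ≤ C)
    (θ : AddCircle p) : BddBelow (orbitSums ℓ lam τ θ) := by
  refine ⟨-(C / (1 - lam)), ?_⟩
  rintro _ ⟨u, -, -, rfl⟩
  exact (abs_le.1 (abs_orbitSum_le hlam₀ hlam₁ hC u)).1

theorem exists_mem_orbitSums_abs_sub_le (hℓ : ℓ ≠ 0) (hlam₀ : 0 ≤ lam) (hlam₁ : lam < 1)
    (hC : ∀ x, |τ x| ≤ C) {K : ℝ≥0} (hτ : LipschitzWith K τ) (θ θ' : AddCircle p) :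
    ∀ x ∈ orbitSums ℓ lam τ θ, ∃ y ∈ orbitSums ℓ lam τ θ', |x - y| ≤ K / (ℓ - lam) * dist θ θ' := by
  rintro _ ⟨u, hu, rfl, rfl⟩
  obtain ⟨v, hv, hv₀, huv⟩ := hu.exists_shadow hℓ θ'
  have hlamℓ : lam < ℓ := hlam₁.trans_le (Nat.one_le_cast.2 (Nat.pos_of_ne_zero hℓ))
  refine ⟨_, ⟨v, hv, hv₀, rfl⟩, ?_⟩
  rw [div_mul_eq_mul_div]
  exact abs_orbitSum_sub_le hlam₀ hlam₁ hlamℓ hC hτ huv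

end OrbitSums

theorem stmt3 (ℓ : ℕ) (hℓ : 2 ≤ ℓ) (lam : ℝ) (hlam : lam ∈ Set.Ioo (0:ℝ) 1)
    (τ : UnitAddCircle → ℝ) (L : ℝ)
    (hτ : ∀ x y : UnitAddCircle, |τ x - τ y| ≤ L * dist x y) :
    (∀ θ θ' : UnitAddCircle,
        |upperB ℓ lam τ θ - upperB ℓ lam τ θ'| ≤ (L / ((ℓ : ℝ) - lam)) * dist θ θ') ∧
    (∀ θ θ' : UnitAddCircle,
        |lowerB ℓ lam τ θ - lowerB ℓ lam τ θ'| ≤ (L / ((ℓ : ℝ) - lam)) * dist θ θ') := by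
  obtain ⟨hlam₀, hlam₁⟩ := hlam
  have hℓ₀ : ℓ ≠ 0 := by omega
  have hL : 0 ≤ L := by
    have h : 0 < dist ((1 / 2 : ℝ) : UnitAddCircle) 0 := by
      rw [dist_zero_right, AddCircle.norm_half_period_eq]
      norm_num
    exact nonneg_of_mul_nonneg_left ((abs_nonneg _).trans (hτ _ _)) h
  have hτL : LipschitzWith ⟨L, hL⟩ τ :=
    .of_dist_le_mul fun x y => by rw [Real.dist_eq]; exact hτ x y
  obtain ⟨C, hC⟩ := isCompact_univ.exists_bound_of_continuousOn hτL.continuous.continuousOn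
  replace hC (x : UnitAddCircle) : |τ x| ≤ C := hC x trivial
  have hne := orbitSums_nonempty (lam := lam) (τ := τ) hℓ₀
  have hbddAbove := bddAbove_orbitSums (ℓ := ℓ) hlam₀.le hlam₁ hC
  have hbddBelow := bddBelow_orbitSums (ℓ := ℓ) hlam₀.le hlam₁ hC
  have hclose := exists_mem_orbitSums_abs_sub_le hℓ₀ hlam₀.le hlam₁ hC hτL
  have hclose' (θ θ' : UnitAddCircle) : ∀ y ∈ orbitSums ℓ lam τ θ', ∃ x ∈ orbitSums ℓ lam τ θ,
      |x - y| ≤ L / (ℓ - lam) * dist θ θ' := by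
    intro y hy
    obtain ⟨x, hx, hxy⟩ := hclose θ' θ y hy
    exact ⟨x, hx, by rwa [abs_sub_comm, dist_comm]⟩
  exact ⟨fun θ θ' => abs_csSup_sub_csSup_le (hne θ) (hne θ') (hbddAbove θ) (hbddAbove θ')
      (hclose θ θ') (hclose' θ θ'),
    fun θ θ' => abs_csInf_sub_csInf_le (hne θ) (hne θ') (hbddBelow θ) (hbddBelow θ')
      (hclose θ θ') (hclose' θ θ')⟩
end

section
/- Let ℓ ≥ 2, λ ∈ (0,1), and τ, μ ∈ L¹(ℝ/ℤ, ℝ) with τ(θ) = μ(ℓθ) - λμ(θ) almost everywhere. Then for every k ∈ ℕ not divisible by ℓ, Σ_{n≥0} λⁿ τ̂(ℓⁿk) = 0, where τ̂(q) denotes the q-th Fourier coefficient of τ. -/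
open MeasureTheory
instance fact01 : Fact ((0:ℝ) < 1) := ⟨one_pos⟩

/-! With `cₙ = μ̂(ℓⁿk)`, the functional equation gives `τ̂(ℓq) = μ̂(q) - λ μ̂(ℓq)`, because
dilation by `ℓ` carries the frequency `q` to `ℓq`, and `τ̂(k) = -λ μ̂(k)`, because `μ(ℓ ·)` is
`1/ℓ`-periodic and so has no frequencies outside `ℓℤ`. Hence the `n`-th term of the series is
`aₙ₋₁ - aₙ` with `aₙ = λⁿ⁺¹ cₙ` (and `a₋₁ = 0`), and the series telescopes to `0`; it converges
absolutely since `|cₙ| ≤ ‖μ‖₁`. -/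

theorem hasSum_zero_of_eq_sub_succ {G : Type*} [AddCommGroup G] [TopologicalSpace G]
    [IsTopologicalAddGroup G] [T2Space G] {f a : ℕ → G} (ha : Summable a) (h₀ : f 0 = -a 0)
    (h_succ : ∀ n, f (n + 1) = a n - a (n + 1)) : HasSum f 0 := by
  have ha' : Summable fun n => a (n + 1) := (summable_nat_add_iff 1).mpr ha
  have h : HasSum (fun n => f (n + 1)) (a 0) := by
    simpa only [h_succ, ha.tsum_eq_zero_add, add_sub_cancel_right] using ha.hasSum.sub ha'.hasSum
  rw [← hasSum_nat_add_iff' 1]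
  simpa [h₀] using h

namespace AddCircle

variable {T : ℝ} [Fact (0 < T)] {E : Type*} [NormedAddCommGroup E] [NormedSpace ℂ E]

theorem norm_fourierCoeff_le_integral_norm (f : AddCircle T → E) (n : ℤ) :
    ‖fourierCoeff f n‖ ≤ ∫ t, ‖f t‖ ∂haarAddCircle :=
  (norm_integral_le_integral_norm _).trans_eq <| by
    simp only [norm_smul, fourier_apply, Circle.norm_coe, one_mul]

theorem fourierCoeff_comp_zsmul_mul {f : AddCircle T → E}
    (hf : AEStronglyMeasurable f haarAddCircle) {m : ℤ} (hm : m ≠ 0) (n : ℤ) :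
    fourierCoeff (fun t => f (m • t)) (m * n) = fourierCoeff f n := by
  have hmp := Measure.measurePreserving_zsmul (haarAddCircle (T := T)) hm
  rw [fourierCoeff, fourierCoeff]
  conv_rhs => rw [← hmp.map_eq]
  rw [integral_map hmp.measurable.aemeasurable (by rw [hmp.map_eq]; exact
      ((fourier (-n)).continuous.aestronglyMeasurable).smul hf)]
  congr 1 with t
  rw [fourier_apply, fourier_apply, smul_smul, neg_mul, mul_comm]

theorem fourierCoeff_eq_zero_of_add_eq {f : AddCircle T → E} {u : AddCircle T}
    (hf : ∀ t, f (t + u) = f t) {n : ℤ} (hn : n • u ≠ 0) : fourierCoeff f n = 0 := by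
  have hu : (fourier (-n) u : ℂ) ≠ 1 := by
    rwa [fourier_apply, neg_zsmul, ← Circle.coe_one, Ne, Circle.coe_inj, ← toCircle_zero,
      (injective_toCircle (Fact.out : 0 < T).ne').eq_iff, neg_eq_zero]
  have h : fourierCoeff f n = (fourier (-n) u : ℂ) • fourierCoeff f n := by
    conv_lhs => rw [fourierCoeff, ← integral_add_right_eq_self _ u]
    rw [fourierCoeff, ← integral_smul]
    congr 1 with t
    rw [hf]
    simp only [fourier_apply, smul_add, add_comm, toCircle_add, Circle.coe_mul, mul_smul]
  by_contra h0
  exact hu (smul_left_injective ℂ h0 (by simpa using h.symm))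

theorem fourierCoeff_comp_nsmul_eq_zero (f : AddCircle T → E) {m : ℕ} (hm : 0 < m) {n : ℤ}
    (hn : ¬ (m : ℤ) ∣ n) : fourierCoeff (fun t => f ((m : ℤ) • t)) n = 0 := by
  obtain ⟨u, hu⟩ : ∃ u : AddCircle T, addOrderOf u = m := ⟨_, addOrderOf_period_div hm⟩
  refine fourierCoeff_eq_zero_of_add_eq (u := u) (fun t => ?_) ?_
  · have hmu : (m : ℤ) • u = 0 := by rw [natCast_zsmul, ← hu, addOrderOf_nsmul_eq_zero]
    rw [smul_add, hmu, add_zero]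
  · rwa [Ne, ← addOrderOf_dvd_iff_zsmul_eq_zero, hu]

theorem fourierCoeff_eq_of_ae_eq_comp_zsmul_sub {f g : AddCircle T → E}
    (hg : Integrable g haarAddCircle) {m : ℤ} (hm : m ≠ 0) {c : ℂ}
    (hfg : ∀ᵐ t ∂haarAddCircle, f t = g (m • t) - c • g t) (n : ℤ) :
    fourierCoeff f n = fourierCoeff (fun t => g (m • t)) n - c • fourierCoeff g n := by
  have hg_comp : Integrable (fun t => g (m • t)) haarAddCircle :=
    ((Measure.measurePreserving_zsmul _ hm).integrable_comp hg.aestronglyMeasurable).mpr hg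
  rw [fourierCoeff_congr_ae hfg]
  simp only [fourierCoeff, smul_sub, smul_comm _ c]
  rw [integral_sub (hg_comp.fourier_smul _) ((hg.fourier_smul _).fun_smul c), integral_smul]

theorem hasSum_fourierCoeff_of_ae_eq_comp_nsmul_sub [CompleteSpace E] {f g : AddCircle T → E}
    (hg : Integrable g haarAddCircle) {m : ℕ} (hm : 0 < m) {c : ℂ} (hc : ‖c‖ < 1)
    (hfg : ∀ᵐ t ∂haarAddCircle, f t = g ((m : ℤ) • t) - c • g t) {k : ℤ}
    (hk : ¬ (m : ℤ) ∣ k) :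
    HasSum (fun n : ℕ => c ^ n • fourierCoeff f ((m : ℤ) ^ n * k)) 0 := by
  have hm' : (m : ℤ) ≠ 0 := by exact_mod_cast hm.ne'
  have hcoeff := fourierCoeff_eq_of_ae_eq_comp_zsmul_sub hg hm' hfg
  refine hasSum_zero_of_eq_sub_succ (a := fun n => c ^ (n + 1) • fourierCoeff g ((m : ℤ) ^ n * k))
    ?_ ?_ fun n => ?_
  · refine .of_norm_bounded (((summable_nat_add_iff 1).mpr
      (summable_geometric_of_lt_one (norm_nonneg c) hc)).mul_right (∫ t, ‖g t‖ ∂haarAddCircle))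
      fun n => ?_
    rw [norm_smul, norm_pow]
    exact mul_le_mul_of_nonneg_left (norm_fourierCoeff_le_integral_norm g _) (by positivity)
  · simp only [pow_zero, one_mul, one_smul, zero_add, pow_one, hcoeff,
      fourierCoeff_comp_nsmul_eq_zero g hm hk, zero_sub]
  · rw [pow_succ' (m : ℤ), mul_assoc, hcoeff,
      fourierCoeff_comp_zsmul_mul hg.aestronglyMeasurable hm', smul_sub, smul_smul, ← pow_succ]

end AddCircle

theorem stmt8_general (ℓ : ℕ) (hℓ : 2 ≤ ℓ) (lam : ℝ) (hlam : lam ∈ Set.Ioo (0:ℝ) 1)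
    (τ μ : UnitAddCircle → ℝ) (hμ : Integrable μ)
    (heq : ∀ᵐ θ : UnitAddCircle, τ θ = μ ((ℓ : ℤ) • θ) - lam * μ θ) :
    ∀ k : ℕ, 0 < k → ¬ ℓ ∣ k →
      ∑' n : ℕ, (lam ^ n : ℂ) *
        fourierCoeff (fun θ : UnitAddCircle => (τ θ : ℂ)) ((ℓ : ℤ) ^ n * (k : ℤ)) = 0 := by
  intro k _ hk
  have hvol : (AddCircle.haarAddCircle : Measure UnitAddCircle) = volume := by
    simp [AddCircle.volume_eq_smul_haarAddCircle]
  have hlam' : ‖(lam : ℂ)‖ < 1 := by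
    rw [Complex.norm_real, Real.norm_of_nonneg hlam.1.le]
    exact hlam.2
  refine (AddCircle.hasSum_fourierCoeff_of_ae_eq_comp_nsmul_sub (by rw [hvol]; exact hμ.ofReal)
    (by omega) hlam' ?_ (by exact_mod_cast hk)).tsum_eq
  rw [hvol]
  filter_upwards [heq] with θ hθ
  simp [hθ]

theorem stmt8 (ℓ : ℕ) (hℓ : 2 ≤ ℓ) (lam : ℝ) (hlam : lam ∈ Set.Ioo (0:ℝ) 1)
    (τ μ : UnitAddCircle → ℝ) (hτ : Integrable τ) (hμ : Integrable μ)
    (heq : ∀ᵐ θ : UnitAddCircle, τ θ = μ ((ℓ : ℤ) • θ) - lam * μ θ) :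
    ∀ k : ℕ, 0 < k → ¬ ℓ ∣ k →
      ∑' n : ℕ, (lam ^ n : ℂ) *
        fourierCoeff (fun θ : UnitAddCircle => (τ θ : ℂ)) ((ℓ : ℤ) ^ n * (k : ℤ)) = 0 :=
  stmt8_general ℓ hℓ lam hlam τ μ hμ heq
end

section
/- Let ℓ ≥ 2 and let τ : ℝ/ℤ → ℝ be a non-constant Lipschitz function with ∫τ = 0. Suppose k ∈ ℤ with ℓ ∤ k and p ≥ 0 satisfy τ̂(ℓʲk) = 0 for 0 ≤ j < p and τ̂(ℓᵖk) ≠ 0. If there exist m ≥ 0 and a Lipschitz μ : ℝ/ℤ → ℝ with L₁ᵐ μ = τ (where L₁ρ = ρ∘m_ℓ - ρ), then m ≤ (‖τ‖_L + 4kℓ^{p+1}|τ̂(ℓ^{p+1}k)|) / (4kℓ^{p+1}|τ̂(ℓᵖk)|). -/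
/-!
`L₁` acts on Fourier coefficients by `(L₁ ρ)^(q) = -ρ̂(q)` when `ℓ ∤ q` and
`(L₁ ρ)^(ℓ n) = ρ̂(n) - ρ̂(ℓ n)`. Running these relations backwards from `τ = L₁ᵐ μ` along the
frequencies `ℓʲ k` gives `μ̂(ℓᵖ⁺¹ k) = ± (τ̂(ℓᵖ⁺¹ k) + m τ̂(ℓᵖ k))`, which grows linearly in `m`.
On the other hand `μ` is Lipschitz with constant at most `‖τ‖_L` (telescope
`ρ x = ∑ₙ L₁ρ (x / ℓⁿ⁺¹) + ρ (x / ℓᴺ)` on the real line), and comparing a Lipschitz `ρ` with its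
translate by half a period of `e_q` gives `|ρ̂(q)| ≤ ‖ρ‖_L / (4 |q|)`.
-/

open MeasureTheory

open AddCircle Filter Topology Finset
open scoped NNReal

section Fourier

variable {E : Type*} [NormedAddCommGroup E]

theorem Continuous.integrable_haarAddCircle {f : UnitAddCircle → E} (hf : Continuous f) :
    Integrable f haarAddCircle :=
  hf.integrable_of_hasCompactSupport (HasCompactSupport.of_compactSpace f)

theorem MeasureTheory.Integrable.comp_zsmul_haarAddCircle {f : UnitAddCircle → E}
    (hf : Integrable f haarAddCircle) {ℓ : ℤ} (hℓ : ℓ ≠ 0) :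
    Integrable (fun x => f (ℓ • x)) haarAddCircle :=
  (Measure.measurePreserving_zsmul _ hℓ).integrable_comp_of_integrable hf

variable [NormedSpace ℂ E]

theorem fourier_apply_add (n : ℤ) (x y : UnitAddCircle) :
    fourier n (x + y) = fourier n x * fourier n y := by
  rw [fourier_apply, fourier_apply, fourier_apply, smul_add, toCircle_add, Circle.coe_mul]

theorem fourierCoeff_sub {f g : UnitAddCircle → E} (hf : Integrable f haarAddCircle)
    (hg : Integrable g haarAddCircle) (n : ℤ) :
    fourierCoeff (fun x => f x - g x) n = fourierCoeff f n - fourierCoeff g n := by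
  simp only [fourierCoeff, smul_sub]
  exact integral_sub (hf.fourier_smul _) (hg.fourier_smul _)

theorem norm_fourierCoeff_le_of_norm_le {f : UnitAddCircle → E} {C : ℝ} (hf : ∀ x, ‖f x‖ ≤ C)
    (n : ℤ) : ‖fourierCoeff f n‖ ≤ C := by
  have hbound : ∀ x, ‖fourier (-n) x • f x‖ ≤ C := fun x => by
    rw [norm_smul, fourier_apply, Circle.norm_coe, one_mul]
    exact hf x
  calc ‖fourierCoeff f n‖ ≤ C * haarAddCircle.real Set.univ :=
        norm_integral_le_of_norm_le_const (ae_of_all _ hbound)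
    _ = C := by rw [probReal_univ, mul_one]

theorem fourierCoeff_comp_add_right (f : UnitAddCircle → E) (c : UnitAddCircle) (n : ℤ) :
    fourierCoeff (fun x => f (x + c)) n = fourier n c • fourierCoeff f n := by
  have hshift : ∀ x, fourier (-n) (x - c) = fourier n c * fourier (-n) x := fun x => by
    rw [sub_eq_add_neg, fourier_apply_add, mul_comm, fourier_apply (x := -c), neg_smul_neg,
      ← fourier_apply]
  simp only [fourierCoeff]
  rw [← integral_sub_right_eq_self _ c, ← integral_smul]
  simp only [sub_add_cancel, hshift, mul_smul]

theorem fourierCoeff_comp_zsmul_mul {f : UnitAddCircle → E} (hf : Integrable f haarAddCircle)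
    {ℓ : ℤ} (hℓ : ℓ ≠ 0) (n : ℤ) :
    fourierCoeff (fun x => f (ℓ • x)) (ℓ * n) = fourierCoeff f n := by
  have hmp : MeasurePreserving (ℓ • · : UnitAddCircle → UnitAddCircle) haarAddCircle
      haarAddCircle := Measure.measurePreserving_zsmul _ hℓ
  have hcomp : ∀ x : UnitAddCircle, fourier (-(ℓ * n)) x = fourier (-n) (ℓ • x) := fun x => by
    rw [fourier_apply, fourier_apply, smul_smul, neg_mul_eq_mul_neg, mul_comm]
  have hmeas := (hf.fourier_smul (-n)).aestronglyMeasurable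
  rw [← hmp.map_eq] at hmeas
  simp only [fourierCoeff, hcomp]
  rw [← integral_map hmp.measurable.aemeasurable hmeas, hmp.map_eq]

/-- `x ↦ f (ℓ • x)` is invariant under translation by `1 / ℓ`, which multiplies the `q`-th
coefficient by the root of unity `e_q (1 / ℓ) ≠ 1`. -/
theorem fourierCoeff_comp_zsmul_of_not_dvd (f : UnitAddCircle → E) {ℓ : ℕ} (hℓ : 0 < ℓ)
    {q : ℤ} (hq : ¬ (ℓ : ℤ) ∣ q) : fourierCoeff (fun x => f ((ℓ : ℤ) • x)) q = 0 := by
  set c : UnitAddCircle := ((1 / ℓ : ℝ) : UnitAddCircle)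
  have hc : addOrderOf c = ℓ := addOrderOf_period_div hℓ
  have hinv : (fun x : UnitAddCircle => f ((ℓ : ℤ) • (x + c))) = fun x => f ((ℓ : ℤ) • x) := by
    funext x
    rw [smul_add, (addOrderOf_dvd_iff_zsmul_eq_zero (x := c)).mp (by rw [hc]), add_zero]
  have hω : fourier q c ≠ 1 := by
    rw [fourier_apply, Ne, Circle.coe_eq_one, ← toCircle_zero,
      (injective_toCircle one_ne_zero).eq_iff, ← addOrderOf_dvd_iff_zsmul_eq_zero, hc]
    exact hq
  have key := fourierCoeff_comp_add_right (fun x => f ((ℓ : ℤ) • x)) c q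
  rw [hinv] at key
  by_contra h
  exact hω (smul_left_injective ℂ h (by simpa using key.symm))

theorem LipschitzWith.norm_fourierCoeff_le {f : UnitAddCircle → E} {K : ℝ≥0}
    (hf : LipschitzWith K f) {q : ℤ} (hq : q ≠ 0) :
    ‖fourierCoeff f q‖ ≤ K / (4 * |(q : ℝ)|) := by
  set c : UnitAddCircle := ((1 / 2 / q : ℝ) : UnitAddCircle)
  have hc : fourier q c = -1 := by
    simpa only [zero_add, fourier_eval_zero, mul_one] using
      fourier_add_half_inv_index hq one_pos (0 : UnitAddCircle)
  have hnorm_c : ‖c‖ ≤ 1 / (2 * |(q : ℝ)|) := by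
    refine QuotientAddGroup.norm_mk_le_norm.trans_eq ?_
    rw [Real.norm_eq_abs, div_div, abs_div, abs_mul, abs_one, abs_two]
  have hdiff : fourierCoeff (fun x => f x - f (x + c)) q = (2 : ℂ) • fourierCoeff f q := by
    rw [fourierCoeff_sub (g := fun x => f (x + c)) hf.continuous.integrable_haarAddCircle
        (hf.continuous.comp (continuous_add_const c)).integrable_haarAddCircle,
      fourierCoeff_comp_add_right, hc, neg_one_smul, sub_neg_eq_add, two_smul]
  have hbound : ∀ x, ‖f x - f (x + c)‖ ≤ K * (1 / (2 * |(q : ℝ)|)) := fun x => by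
    rw [← dist_eq_norm]
    refine (hf.dist_le_mul _ _).trans (mul_le_mul_of_nonneg_left ?_ K.coe_nonneg)
    rwa [dist_comm, dist_eq_norm, add_sub_cancel_left]
  calc ‖fourierCoeff f q‖ = ‖fourierCoeff (fun x => f x - f (x + c)) q‖ / 2 := by
        rw [hdiff, norm_smul, Complex.norm_two]; ring
    _ ≤ K * (1 / (2 * |(q : ℝ)|)) / 2 := by gcongr; exact norm_fourierCoeff_le_of_norm_le hbound q
    _ = K / (4 * |(q : ℝ)|) := by field_simp; ring

end Fourier

section Lipschitz

theorem sum_range_inv_pow_succ_le {c : ℝ} (hc : 1 < c) (N : ℕ) :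
    ∑ n ∈ range N, c⁻¹ ^ (n + 1) ≤ 1 / (c - 1) := by
  have h0 : 0 < c⁻¹ := by positivity
  have h1 : c⁻¹ < 1 := inv_lt_one_of_one_lt₀ hc
  have hgeom := geom_sum_Ico_le_of_lt_one h0.le h1 (m := 0) (n := N)
  rw [← range_eq_Ico, pow_zero] at hgeom
  calc ∑ n ∈ range N, c⁻¹ ^ (n + 1) = c⁻¹ * ∑ n ∈ range N, c⁻¹ ^ n := by
        rw [mul_sum]; simp only [pow_succ']
    _ ≤ c⁻¹ * (1 / (1 - c⁻¹)) := by gcongr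
    _ = 1 / (c - 1) := by field_simp

variable {F : Type*} [SeminormedAddCommGroup F]

theorem sum_range_sub_comp_mul_inv_pow {G : Type*} [AddCommGroup G] (f : ℝ → G) {c : ℝ}
    (hc : c ≠ 0) (z : ℝ) (N : ℕ) :
    ∑ n ∈ range N, (f (c * (z * c⁻¹ ^ (n + 1))) - f (z * c⁻¹ ^ (n + 1))) =
      f z - f (z * c⁻¹ ^ N) := by
  have hscale : ∀ n : ℕ, c * (z * c⁻¹ ^ (n + 1)) = z * c⁻¹ ^ n := fun n => by
    rw [pow_succ]; field_simp
  simp only [hscale]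
  simpa using sum_range_sub' (fun n => f (z * c⁻¹ ^ n)) N

theorem dist_le_of_lipschitzWith_comp_mul_sub {f : ℝ → F} {c : ℝ} (hc : 1 < c)
    (hf : ContinuousAt f 0) {K : ℝ≥0} (hg : LipschitzWith K fun x => f (c * x) - f x)
    (x y : ℝ) : dist (f x) (f y) ≤ K / (c - 1) * dist x y := by
  have hc0 : 0 < c := by linarith
  set g : ℝ → F := fun x => f (c * x) - f x
  have htele := sum_range_sub_comp_mul_inv_pow f hc0.ne'
  have hbound : ∀ N : ℕ, dist (f x) (f y) ≤
      K / (c - 1) * dist x y + dist (f (x * c⁻¹ ^ N)) (f (y * c⁻¹ ^ N)) := fun N => by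
    have hsum : dist (f x - f (x * c⁻¹ ^ N)) (f y - f (y * c⁻¹ ^ N)) ≤ K / (c - 1) * dist x y :=
      calc dist (f x - f (x * c⁻¹ ^ N)) (f y - f (y * c⁻¹ ^ N))
          = ‖∑ n ∈ range N, (g (x * c⁻¹ ^ (n + 1)) - g (y * c⁻¹ ^ (n + 1)))‖ := by
            rw [sum_sub_distrib, htele, htele, dist_eq_norm]
        _ ≤ ∑ n ∈ range N, K * dist x y * c⁻¹ ^ (n + 1) := by
            refine norm_sum_le_of_le _ fun n _ => ?_
            rw [← dist_eq_norm]
            refine (hg.dist_le_mul _ _).trans_eq ?_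
            rw [Real.dist_eq, Real.dist_eq, ← sub_mul, abs_mul,
              abs_of_pos (pow_pos (inv_pos.mpr hc0) _)]
            ring
        _ = K * dist x y * ∑ n ∈ range N, c⁻¹ ^ (n + 1) := by rw [mul_sum]
        _ ≤ K * dist x y * (1 / (c - 1)) := by gcongr; exact sum_range_inv_pow_succ_le hc N
        _ = K / (c - 1) * dist x y := by ring
    calc dist (f x) (f y)
        ≤ dist (f x - f (x * c⁻¹ ^ N)) (f y - f (y * c⁻¹ ^ N))
          + dist (f (x * c⁻¹ ^ N)) (f (y * c⁻¹ ^ N)) := by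
          simpa using dist_add_add_le (f x - f (x * c⁻¹ ^ N)) (f (x * c⁻¹ ^ N))
            (f y - f (y * c⁻¹ ^ N)) (f (y * c⁻¹ ^ N))
      _ ≤ _ := by gcongr
  have htail : Tendsto (fun N : ℕ => dist (f (x * c⁻¹ ^ N)) (f (y * c⁻¹ ^ N))) atTop (𝓝 0) := by
    have hpow : Tendsto (fun N : ℕ => c⁻¹ ^ N) atTop (𝓝 0) :=
      tendsto_pow_atTop_nhds_zero_of_lt_one (by positivity) (inv_lt_one_of_one_lt₀ hc)
    have hx := hf.tendsto.comp (by simpa using hpow.const_mul x)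
    have hy := hf.tendsto.comp (by simpa using hpow.const_mul y)
    simpa using hx.dist hy
  simpa using ge_of_tendsto (htail.const_add _) (Eventually.of_forall hbound)

theorem UnitAddCircle.lipschitzWith_coe : LipschitzWith 1 ((↑) : ℝ → UnitAddCircle) :=
  LipschitzWith.of_dist_le_mul fun x y => by
    rw [NNReal.coe_one, one_mul, dist_eq_norm, dist_eq_norm, ← AddCircle.coe_sub]
    exact QuotientAddGroup.norm_mk_le_norm

theorem UnitAddCircle.exists_coe_eq_dist_eq (a : ℝ) (v : UnitAddCircle) :
    ∃ b : ℝ, (b : UnitAddCircle) = v ∧ dist a b = dist (a : UnitAddCircle) v := by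
  obtain ⟨b, rfl⟩ := QuotientAddGroup.mk_surjective v
  refine ⟨b + round (a - b), ?_, ?_⟩
  · rw [AddCircle.coe_add, add_eq_left, AddCircle.coe_eq_zero_iff]
    exact ⟨round (a - b), by simp⟩
  · rw [dist_eq_norm, dist_eq_norm, ← AddCircle.coe_sub, UnitAddCircle.norm_eq, Real.norm_eq_abs,
      sub_add_eq_sub_sub]

theorem UnitAddCircle.lipschitzWith_of_comp_coe {α : Type*} [PseudoMetricSpace α]
    {f : UnitAddCircle → α} {K : ℝ≥0} (hf : LipschitzWith K (f ∘ (↑) : ℝ → α)) :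
    LipschitzWith K f := by
  refine LipschitzWith.of_dist_le_mul fun u v => ?_
  obtain ⟨a, rfl⟩ := QuotientAddGroup.mk_surjective u
  obtain ⟨b, rfl, hab⟩ := UnitAddCircle.exists_coe_eq_dist_eq a v
  rw [← hab]
  exact hf.dist_le_mul a b

end Lipschitz

def L₁ {G : Type*} [Sub G] (ℓ : ℤ) (ρ : UnitAddCircle → G) : UnitAddCircle → G :=
  fun θ => ρ (ℓ • θ) - ρ θ

section L₁

theorem Continuous.L₁ {G : Type*} [TopologicalSpace G] [AddGroup G] [IsTopologicalAddGroup G]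
    {ρ : UnitAddCircle → G} (hρ : Continuous ρ) (ℓ : ℤ) : Continuous (L₁ ℓ ρ) :=
  (hρ.comp (continuous_zsmul ℓ)).sub hρ

theorem ofReal_comp_iterate_L₁ (ℓ : ℤ) (ρ : UnitAddCircle → ℝ) (m : ℕ) :
    (fun θ => ((((L₁ ℓ)^[m] ρ) θ : ℝ) : ℂ)) = (L₁ ℓ)^[m] fun θ => (ρ θ : ℂ) :=
  Function.Semiconj.iterate_right (f := fun (f : UnitAddCircle → ℝ) θ => (f θ : ℂ))
    (fun _ => funext fun _ => Complex.ofReal_sub _ _) m ρ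

variable {F : Type*} [SeminormedAddCommGroup F]

theorem lipschitzWith_of_lipschitzWith_L₁ {ℓ : ℕ} (hℓ : 2 ≤ ℓ) {ρ : UnitAddCircle → F}
    (hρ : Continuous ρ) {K : ℝ≥0} (h : LipschitzWith K (L₁ ℓ ρ)) : LipschitzWith K ρ := by
  have hℓR : (2 : ℝ) ≤ ℓ := by exact_mod_cast hℓ
  have hcoe : ∀ x : ℝ, ((ℓ * x : ℝ) : UnitAddCircle) = (ℓ : ℤ) • (x : UnitAddCircle) := fun x => by
    rw [← AddCircle.coe_zsmul, zsmul_eq_mul, Int.cast_natCast]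
  have hg : LipschitzWith K fun x : ℝ => ρ ↑(ℓ * x) - ρ ↑x := by
    simpa only [L₁, Function.comp_def, hcoe, mul_one] using h.comp UnitAddCircle.lipschitzWith_coe
  refine UnitAddCircle.lipschitzWith_of_comp_coe (LipschitzWith.of_dist_le_mul fun x y => ?_)
  calc dist (ρ x) (ρ y) ≤ K / (ℓ - 1) * dist x y :=
        dist_le_of_lipschitzWith_comp_mul_sub (f := fun x : ℝ => ρ x) (by linarith)
          (hρ.comp continuous_quotient_mk').continuousAt hg x y
    _ ≤ K * dist x y := by
        gcongr
        exact div_le_self K.coe_nonneg (by linarith)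

theorem lipschitzWith_of_lipschitzWith_iterate_L₁ {ℓ : ℕ} (hℓ : 2 ≤ ℓ) {ρ : UnitAddCircle → F}
    (hρ : Continuous ρ) {K : ℝ≥0} {m : ℕ} (h : LipschitzWith K ((L₁ ℓ)^[m] ρ)) :
    LipschitzWith K ρ := by
  induction m generalizing ρ with
  | zero => exact h
  | succ m ih => exact lipschitzWith_of_lipschitzWith_L₁ hℓ hρ (ih (hρ.L₁ ℓ) h)

variable {E : Type*} [NormedAddCommGroup E]

theorem MeasureTheory.Integrable.L₁ {ρ : UnitAddCircle → E} (hρ : Integrable ρ haarAddCircle)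
    {ℓ : ℤ} (hℓ : ℓ ≠ 0) : Integrable (L₁ ℓ ρ) haarAddCircle :=
  (hρ.comp_zsmul_haarAddCircle hℓ).sub hρ

variable [NormedSpace ℂ E]

theorem fourierCoeff_L₁_of_not_dvd {ρ : UnitAddCircle → E} (hρ : Integrable ρ haarAddCircle)
    {ℓ : ℕ} (hℓ : 0 < ℓ) {q : ℤ} (hq : ¬ (ℓ : ℤ) ∣ q) :
    fourierCoeff (L₁ ℓ ρ) q = -fourierCoeff ρ q := by
  unfold L₁
  rw [fourierCoeff_sub (hρ.comp_zsmul_haarAddCircle (by positivity)) hρ,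
    fourierCoeff_comp_zsmul_of_not_dvd ρ hℓ hq, zero_sub]

theorem fourierCoeff_L₁_mul {ρ : UnitAddCircle → E} (hρ : Integrable ρ haarAddCircle)
    {ℓ : ℤ} (hℓ : ℓ ≠ 0) (n : ℤ) :
    fourierCoeff (L₁ ℓ ρ) (ℓ * n) = fourierCoeff ρ n - fourierCoeff ρ (ℓ * n) := by
  unfold L₁
  rw [fourierCoeff_sub (hρ.comp_zsmul_haarAddCircle hℓ) hρ, fourierCoeff_comp_zsmul_mul hρ hℓ]

end L₁

section Recursion

variable {R : Type*} [CommRing R] (a : ℕ → ℕ → R)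

theorem eq_neg_of_forall_lt_eq_zero (h₀ : ∀ i, a (i + 1) 0 = -a i 0)
    (hsucc : ∀ i j, a (i + 1) (j + 1) = a i j - a i (j + 1)) {i p : ℕ}
    (hz : ∀ j < p, a (i + 1) j = 0) : ∀ j ≤ p, a i j = -a (i + 1) j := by
  intro j hj
  induction j with
  | zero => linear_combination h₀ i
  | succ j ih => linear_combination hsucc i j + ih (by omega) - hz j (by omega)

theorem eq_neg_one_pow_mul_add (h₀ : ∀ i, a (i + 1) 0 = -a i 0)
    (hsucc : ∀ i j, a (i + 1) (j + 1) = a i j - a i (j + 1)) {p : ℕ} (t i : ℕ)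
    (hz : ∀ j < p, a (i + t) j = 0) :
    (∀ j ≤ p, a i j = (-1) ^ t * a (i + t) j) ∧
      a i (p + 1) = (-1) ^ t * (a (i + t) (p + 1) + t * a (i + t) p) := by
  induction t generalizing i with
  | zero => simp
  | succ t ih =>
    rw [show i + (t + 1) = i + 1 + t by omega] at hz ⊢
    obtain ⟨hlow, htop⟩ := ih (i + 1) hz
    have hneg := eq_neg_of_forall_lt_eq_zero a h₀ hsucc
      (fun j hj => by rw [hlow j hj.le, hz j hj, mul_zero])
    refine ⟨fun j hj => by rw [hneg j hj, hlow j hj, pow_succ]; ring, ?_⟩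
    push_cast
    linear_combination hsucc i p - htop + hneg p le_rfl - hlow p le_rfl

end Recursion

theorem fourierCoeff_eq_neg_one_pow_mul_iterate_L₁ {f : UnitAddCircle → ℂ}
    (hf : Integrable f haarAddCircle) {ℓ : ℕ} (hℓ : 0 < ℓ) {k : ℤ} (hk : ¬ (ℓ : ℤ) ∣ k)
    {p m : ℕ} (hz : ∀ j < p, fourierCoeff ((L₁ ℓ)^[m] f) ((ℓ : ℤ) ^ j * k) = 0) :
    fourierCoeff f ((ℓ : ℤ) ^ (p + 1) * k) =
      (-1) ^ m * (fourierCoeff ((L₁ ℓ)^[m] f) ((ℓ : ℤ) ^ (p + 1) * k) +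
        m * fourierCoeff ((L₁ ℓ)^[m] f) ((ℓ : ℤ) ^ p * k)) := by
  have hℓ' : (ℓ : ℤ) ≠ 0 := by positivity
  have hint : ∀ i, Integrable ((L₁ ℓ)^[i] f) haarAddCircle :=
    Function.Iterate.rec _ hf fun g hg => hg.L₁ hℓ'
  set a : ℕ → ℕ → ℂ := fun i j => fourierCoeff ((L₁ ℓ)^[i] f) ((ℓ : ℤ) ^ j * k)
  have h₀ : ∀ i, a (i + 1) 0 = -a i 0 := fun i => by
    simp only [a, pow_zero, one_mul, Function.iterate_succ_apply']
    exact fourierCoeff_L₁_of_not_dvd (hint i) hℓ hk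
  have hsucc : ∀ i j, a (i + 1) (j + 1) = a i j - a i (j + 1) := fun i j => by
    simp only [a, pow_succ', mul_assoc, Function.iterate_succ_apply']
    exact fourierCoeff_L₁_mul (hint i) hℓ' _
  obtain ⟨-, h⟩ := eq_neg_one_pow_mul_add a h₀ hsucc m 0 (by rw [zero_add]; exact hz)
  rwa [zero_add] at h

instance UnitAddCircle.instNontrivial : Nontrivial UnitAddCircle :=
  ⟨0, ((1 / 2 : ℝ) : UnitAddCircle), fun h => by
    have h2 := addOrderOf_period_div (p := (1 : ℝ)) (n := 2) two_pos
    rw [Nat.cast_ofNat, ← h, addOrderOf_zero] at h2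
    exact absurd h2 (by norm_num)⟩

theorem nonneg_of_forall_abs_sub_le_mul_dist {X : Type*} [MetricSpace X] [Nontrivial X]
    {f : X → ℝ} {L : ℝ} (hf : ∀ x y, |f x - f y| ≤ L * dist x y) : 0 ≤ L := by
  obtain ⟨x, y, hxy⟩ := exists_pair_ne X
  exact nonneg_of_mul_nonneg_left ((abs_nonneg _).trans (hf x y)) (dist_pos.mpr hxy)

theorem natCast_le_div_of_norm_add_mul_le {A B : ℂ} (hB : B ≠ 0) {m : ℕ} {L N : ℝ} (hN : 0 < N)
    (h : ‖A + m * B‖ ≤ L / N) : (m : ℝ) ≤ (L + N * ‖A‖) / (N * ‖B‖) := by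
  have hmB : m * ‖B‖ ≤ L / N + ‖A‖ :=
    calc m * ‖B‖ = ‖(A + m * B) - A‖ := by rw [add_sub_cancel_left, norm_mul, Complex.norm_natCast]
      _ ≤ ‖A + m * B‖ + ‖A‖ := norm_sub_le _ _
      _ ≤ L / N + ‖A‖ := by gcongr
  rw [le_div_iff₀ (by positivity)]
  calc (m : ℝ) * (N * ‖B‖) = N * (m * ‖B‖) := by ring
    _ ≤ N * (L / N + ‖A‖) := by gcongr
    _ = L + N * ‖A‖ := by field_simp

theorem stmt13_general (ℓ : ℕ) (hℓ : 2 ≤ ℓ) (τ : UnitAddCircle → ℝ) (L : ℝ)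
    (hτL : ∀ x y : UnitAddCircle, |τ x - τ y| ≤ L * dist x y)
    (k : ℕ) (hkd : ¬ ℓ ∣ k) (p : ℕ)
    (hzero : ∀ j < p, fourierCoeff (fun θ : UnitAddCircle => (τ θ : ℂ)) ((ℓ : ℤ) ^ j * k) = 0)
    (hpnz : fourierCoeff (fun θ : UnitAddCircle => (τ θ : ℂ)) ((ℓ : ℤ) ^ p * k) ≠ 0)
    (m : ℕ) (μ : UnitAddCircle → ℝ)
    (hμ : ∃ K : ℝ, ∀ x y : UnitAddCircle, |μ x - μ y| ≤ K * dist x y)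
    (hiter : ((fun ρ : UnitAddCircle → ℝ => fun θ => ρ ((ℓ : ℤ) • θ) - ρ θ)^[m]) μ = τ) :
    (m : ℝ) ≤
      (L + 4 * k * (ℓ : ℝ) ^ (p + 1) *
        ‖fourierCoeff (fun θ : UnitAddCircle => (τ θ : ℂ)) ((ℓ : ℤ) ^ (p + 1) * k)‖) /
      (4 * k * (ℓ : ℝ) ^ (p + 1) *
        ‖fourierCoeff (fun θ : UnitAddCircle => (τ θ : ℂ)) ((ℓ : ℤ) ^ p * k)‖) := by
  change (L₁ ℓ)^[m] μ = τ at hiter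
  have hk : 0 < k := Nat.pos_of_ne_zero (by rintro rfl; exact hkd (dvd_zero ℓ))
  have hL : 0 ≤ L := nonneg_of_forall_abs_sub_le_mul_dist hτL
  obtain ⟨K, hK⟩ := hμ
  have hτLip : LipschitzWith L.toNNReal τ := LipschitzWith.of_dist_le' hτL
  have hμLip : LipschitzWith L.toNNReal μ :=
    lipschitzWith_of_lipschitzWith_iterate_L₁ hℓ (LipschitzWith.of_dist_le' hK).continuous
      (by rw [hiter]; exact hτLip)
  have hcoeff := fourierCoeff_eq_neg_one_pow_mul_iterate_L₁ (f := fun θ => (μ θ : ℂ))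
    (Complex.continuous_ofReal.comp hμLip.continuous).integrable_haarAddCircle
    (by omega : 0 < ℓ) (by exact_mod_cast hkd : ¬ (ℓ : ℤ) ∣ k)
    (by rw [← ofReal_comp_iterate_L₁, hiter]; exact hzero)
  rw [← ofReal_comp_iterate_L₁, hiter] at hcoeff
  have hdecay := (Complex.isometry_ofReal.lipschitz.comp hμLip).norm_fourierCoeff_le
    (q := (ℓ : ℤ) ^ (p + 1) * k) (by positivity)
  rw [Function.comp_def, hcoeff, norm_mul, norm_pow, norm_neg, norm_one, one_pow, one_mul,
    one_mul, Real.coe_toNNReal _ hL] at hdecay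
  refine natCast_le_div_of_norm_add_mul_le hpnz (by positivity) (hdecay.trans_eq ?_)
  push_cast
  rw [abs_of_pos (by positivity)]
  ring

theorem stmt13 (ℓ : ℕ) (hℓ : 2 ≤ ℓ) (τ : UnitAddCircle → ℝ) (L : ℝ)
    (hτL : ∀ x y : UnitAddCircle, |τ x - τ y| ≤ L * dist x y)
    (hnc : ∃ x y, τ x ≠ τ y) (hint : ∫ θ : UnitAddCircle, τ θ = 0)
    (k : ℕ) (hk : 0 < k) (hkd : ¬ ℓ ∣ k) (p : ℕ)
    (hzero : ∀ j < p, fourierCoeff (fun θ : UnitAddCircle => (τ θ : ℂ)) ((ℓ : ℤ) ^ j * k) = 0)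
    (hpnz : fourierCoeff (fun θ : UnitAddCircle => (τ θ : ℂ)) ((ℓ : ℤ) ^ p * k) ≠ 0)
    (m : ℕ) (μ : UnitAddCircle → ℝ)
    (hμ : ∃ K : ℝ, ∀ x y : UnitAddCircle, |μ x - μ y| ≤ K * dist x y)
    (hiter : ((fun ρ : UnitAddCircle → ℝ => fun θ => ρ ((ℓ : ℤ) • θ) - ρ θ)^[m]) μ = τ) :
    (m : ℝ) ≤
      (L + 4 * k * (ℓ : ℝ) ^ (p + 1) *
        ‖fourierCoeff (fun θ : UnitAddCircle => (τ θ : ℂ)) ((ℓ : ℤ) ^ (p + 1) * k)‖) /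
      (4 * k * (ℓ : ℝ) ^ (p + 1) *
        ‖fourierCoeff (fun θ : UnitAddCircle => (τ θ : ℂ)) ((ℓ : ℤ) ^ p * k)‖) :=
  stmt13_general ℓ hℓ τ L hτL k hkd p hzero hpnz m μ hμ hiter
end

section
/- Let V̄ = ℝ × [-T₀,T₀] and F̃(s,t) = (f̃(s,t), g̃(s,t)) : V̄ → ℝ² satisfying: f̃(s₀,t) - f̃(s₁,t) ≥ ℓ₀(s₀-s₁) for s₀ > s₁; |g̃(s₀,t) - g̃(s₁,t)| ≤ C₂₁|s₀-s₁|; |f̃(s,t₀) - f̃(s,t₁)| ≤ C₁₂|t₀-t₁|; |g̃(s,t₀) - g̃(s,t₁)| ≤ λ₀|t₀-t₁|, with ℓ₀, λ₀, C₁₂, C₂₁ > 0. If ρ̃ : ℝ → [-T₀,T₀] is Lipschitz with ‖ρ̃‖_L < ℓ₀/C₁₂, then the image under F̃ of the graph of ρ̃ is the graph of a Lipschitz function with Lipschitz constant at most (C₂₁ + λ₀‖ρ̃‖_L)/(ℓ₀ - C₁₂‖ρ̃‖_L). -/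
/-!
Along the graph `s ↦ (s, ρ s)` the first coordinate `u s = f s (ρ s)` still grows at rate at
least `ℓ₀ - C₁₂ K`, because moving along the graph changes `t` by at most `K` times the change
in `s`; likewise the second coordinate `v s = g s (ρ s)` is `(C₂₁ + λ₀ K)`-Lipschitz. Hence `u`
is injective with a Lipschitz inverse on its range, and `v ∘ u⁻¹` is Lipschitz on that range
with the ratio of the two constants. McShane's extension makes it a Lipschitz function on `ℝ`
whose graph contains the image of the graph of `ρ`.
-/

open Set Function NNReal

variable {α β γ : Type*}

theorem AntilipschitzWith.exists_lipschitzWith_comp_eq [MetricSpace α] [PseudoMetricSpace β]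
    {u : α → β} {v : α → ℝ} {Ku Kv : ℝ≥0} (hu : AntilipschitzWith Ku u)
    (hv : LipschitzWith Kv v) : ∃ φ : β → ℝ, LipschitzWith (Kv * Ku) φ ∧ φ ∘ u = v := by
  rcases isEmpty_or_nonempty α with hα | hα
  · exact ⟨0, (LipschitzWith.const 0).weaken zero_le, funext hα.elim⟩
  have hinv : LipschitzOnWith Ku (invFun u) (range u) :=
    lipschitzOnWith_iff_restrict.mpr (hu.to_rightInvOn fun _ hb => invFun_eq hb)
  obtain ⟨φ, hφ, hφu⟩ := (hv.comp_lipschitzOnWith hinv).extend_real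
  refine ⟨φ, hφ, funext fun a => ?_⟩
  simp [← hφu (mem_range_self a), leftInverse_invFun hu.injective a]

theorem lipschitzWith_comp_graph [PseudoMetricSpace α] [PseudoMetricSpace β]
    [PseudoMetricSpace γ] {g : α → β → γ} {ρ : α → β} {S : Set β} {C₁ C₂ K : ℝ≥0}
    (hg₁ : ∀ t ∈ S, LipschitzWith C₁ (g · t)) (hg₂ : ∀ s, LipschitzOnWith C₂ (g s) S)
    (hρ : LipschitzWith K ρ) (hρS : ∀ s, ρ s ∈ S) :
    LipschitzWith (C₁ + C₂ * K) fun s => g s (ρ s) := by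
  refine LipschitzWith.of_dist_le_mul fun s₀ s₁ => ?_
  calc dist (g s₀ (ρ s₀)) (g s₁ (ρ s₁))
      ≤ dist (g s₀ (ρ s₀)) (g s₁ (ρ s₀)) + dist (g s₁ (ρ s₀)) (g s₁ (ρ s₁)) := dist_triangle ..
    _ ≤ C₁ * dist s₀ s₁ + C₂ * (K * dist s₀ s₁) := by
        gcongr
        · exact (hg₁ _ (hρS s₀)).dist_le_mul s₀ s₁
        · exact ((hg₂ s₁).dist_le_mul _ (hρS s₀) _ (hρS s₁)).trans
            (by gcongr; exact hρ.dist_le_mul s₀ s₁)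
    _ = ↑(C₁ + C₂ * K) * dist s₀ s₁ := by push_cast; ring

theorem mul_sub_le_sub_comp_graph [PseudoMetricSpace β] {f : ℝ → β → ℝ} {ρ : ℝ → β}
    {S : Set β} {ℓ : ℝ} {C K : ℝ≥0}
    (hf₁ : ∀ t ∈ S, ∀ s₀ s₁, s₁ < s₀ → ℓ * (s₀ - s₁) ≤ f s₀ t - f s₁ t)
    (hf₂ : ∀ s, LipschitzOnWith C (f s) S) (hρ : LipschitzWith K ρ) (hρS : ∀ s, ρ s ∈ S)
    {s₀ s₁ : ℝ} (hs : s₁ < s₀) :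
    (ℓ - C * K) * (s₀ - s₁) ≤ f s₀ (ρ s₀) - f s₁ (ρ s₁) := by
  have hmove : |f s₁ (ρ s₀) - f s₁ (ρ s₁)| ≤ C * (K * (s₀ - s₁)) := by
    have hρs := hρ.dist_le_mul s₀ s₁
    rw [Real.dist_eq s₀, abs_of_pos (sub_pos.mpr hs)] at hρs
    calc |f s₁ (ρ s₀) - f s₁ (ρ s₁)| ≤ C * dist (ρ s₀) (ρ s₁) :=
          (hf₂ s₁).dist_le_mul _ (hρS s₀) _ (hρS s₁)
      _ ≤ C * (K * (s₀ - s₁)) := by gcongr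
  have := hf₁ _ (hρS s₀) s₀ s₁ hs
  linarith [neg_abs_le (f s₁ (ρ s₀) - f s₁ (ρ s₁))]

theorem antilipschitzWith_of_mul_sub_le {u : ℝ → ℝ} {c : ℝ} (hc : 0 < c)
    (hu : ∀ s₀ s₁, s₁ < s₀ → c * (s₀ - s₁) ≤ u s₀ - u s₁) :
    AntilipschitzWith (Real.toNNReal c)⁻¹ u := by
  refine AntilipschitzWith.of_le_mul_dist fun s₀ s₁ => ?_
  suffices c * dist s₀ s₁ ≤ dist (u s₀) (u s₁) by
    rw [NNReal.coe_inv, Real.coe_toNNReal _ hc.le, inv_mul_eq_div, le_div_iff₀' hc]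
    exact this
  rcases lt_trichotomy s₁ s₀ with h | rfl | h
  · rw [Real.dist_eq, Real.dist_eq, abs_of_pos (sub_pos.mpr h)]
    exact (hu s₀ s₁ h).trans (le_abs_self _)
  · simp
  · rw [Real.dist_eq, Real.dist_eq, abs_sub_comm, abs_of_pos (sub_pos.mpr h), abs_sub_comm]
    exact (hu s₁ s₀ h).trans (le_abs_self _)

theorem stmt18_general (T₀ ℓ₀ lam₀ C12 C21 : ℝ)
    (hlam₀ : 0 < lam₀) (hC12 : 0 < C12) (hC21 : 0 < C21)
    (f g : ℝ → ℝ → ℝ)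
    (hf1 : ∀ s₀ s₁ t : ℝ, t ∈ Set.Icc (-T₀) T₀ → s₁ < s₀ →
      ℓ₀ * (s₀ - s₁) ≤ f s₀ t - f s₁ t)
    (hg1 : ∀ s₀ s₁ t : ℝ, t ∈ Set.Icc (-T₀) T₀ →
      |g s₀ t - g s₁ t| ≤ C21 * |s₀ - s₁|)
    (hf2 : ∀ s t₀ t₁ : ℝ, t₀ ∈ Set.Icc (-T₀) T₀ → t₁ ∈ Set.Icc (-T₀) T₀ →
      |f s t₀ - f s t₁| ≤ C12 * |t₀ - t₁|)
    (hg2 : ∀ s t₀ t₁ : ℝ, t₀ ∈ Set.Icc (-T₀) T₀ → t₁ ∈ Set.Icc (-T₀) T₀ →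
      |g s t₀ - g s t₁| ≤ lam₀ * |t₀ - t₁|)
    (ρ : ℝ → ℝ) (hρmem : ∀ s, ρ s ∈ Set.Icc (-T₀) T₀)
    (K : ℝ) (hρK : ∀ s s' : ℝ, |ρ s - ρ s'| ≤ K * |s - s'|) (hK : K < ℓ₀ / C12) :
    ∃ φ : ℝ → ℝ,
      (∀ x y : ℝ, |φ x - φ y| ≤ ((C21 + lam₀ * K) / (ℓ₀ - C12 * K)) * |x - y|) ∧
      ∀ s : ℝ, φ (f s (ρ s)) = g s (ρ s) := by
  lift K to ℝ≥0 using (abs_nonneg _).trans (by simpa using hρK 1 0)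
  lift C12 to ℝ≥0 using hC12.le
  lift C21 to ℝ≥0 using hC21.le
  lift lam₀ to ℝ≥0 using hlam₀.le
  have hρ : LipschitzWith K ρ := .of_dist_le_mul hρK
  have hgap : 0 < ℓ₀ - C12 * K := by
    have := (lt_div_iff₀ hC12).mp hK
    linarith
  have hu : AntilipschitzWith (Real.toNNReal (ℓ₀ - C12 * K))⁻¹ fun s => f s (ρ s) :=
    antilipschitzWith_of_mul_sub_le hgap fun s₀ s₁ hs =>
      mul_sub_le_sub_comp_graph (fun t ht s₀ s₁ => hf1 s₀ s₁ t ht)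
        (fun s => .of_dist_le_mul fun t₀ ht₀ t₁ ht₁ => hf2 s t₀ t₁ ht₀ ht₁) hρ hρmem hs
  have hv : LipschitzWith (C21 + lam₀ * K) fun s => g s (ρ s) :=
    lipschitzWith_comp_graph (fun t ht => .of_dist_le_mul fun s₀ s₁ => hg1 s₀ s₁ t ht)
      (fun s => .of_dist_le_mul fun t₀ ht₀ t₁ ht₁ => hg2 s t₀ t₁ ht₀ ht₁) hρ hρmem
  obtain ⟨φ, hφ, hφu⟩ := hu.exists_lipschitzWith_comp_eq hv
  refine ⟨φ, fun x y => ?_, congrFun hφu⟩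
  simpa [Real.coe_toNNReal _ hgap.le, div_eq_mul_inv, Real.dist_eq] using hφ.dist_le_mul x y

theorem stmt18 (T₀ ℓ₀ lam₀ C12 C21 : ℝ)
    (hT₀ : 0 < T₀) (hℓ₀ : 0 < ℓ₀) (hlam₀ : 0 < lam₀) (hC12 : 0 < C12) (hC21 : 0 < C21)
    (f g : ℝ → ℝ → ℝ)
    (hf1 : ∀ s₀ s₁ t : ℝ, t ∈ Set.Icc (-T₀) T₀ → s₁ < s₀ →
      ℓ₀ * (s₀ - s₁) ≤ f s₀ t - f s₁ t)
    (hg1 : ∀ s₀ s₁ t : ℝ, t ∈ Set.Icc (-T₀) T₀ →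
      |g s₀ t - g s₁ t| ≤ C21 * |s₀ - s₁|)
    (hf2 : ∀ s t₀ t₁ : ℝ, t₀ ∈ Set.Icc (-T₀) T₀ → t₁ ∈ Set.Icc (-T₀) T₀ →
      |f s t₀ - f s t₁| ≤ C12 * |t₀ - t₁|)
    (hg2 : ∀ s t₀ t₁ : ℝ, t₀ ∈ Set.Icc (-T₀) T₀ → t₁ ∈ Set.Icc (-T₀) T₀ →
      |g s t₀ - g s t₁| ≤ lam₀ * |t₀ - t₁|)
    (ρ : ℝ → ℝ) (hρmem : ∀ s, ρ s ∈ Set.Icc (-T₀) T₀)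
    (K : ℝ) (hρK : ∀ s s' : ℝ, |ρ s - ρ s'| ≤ K * |s - s'|) (hK : K < ℓ₀ / C12) :
    ∃ φ : ℝ → ℝ,
      (∀ x y : ℝ, |φ x - φ y| ≤ ((C21 + lam₀ * K) / (ℓ₀ - C12 * K)) * |x - y|) ∧
      ∀ s : ℝ, φ (f s (ρ s)) = g s (ρ s) :=
  stmt18_general T₀ ℓ₀ lam₀ C12 C21 hlam₀ hC12 hC21 f g hf1 hg1 hf2 hg2 ρ hρmem K hρK hK
end
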